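/- Suppose (F,L) is a λ-good face-laminar pair for some λ with n ≤ λ ≤ 2n. Then the face F consists of a single point, i.e., F contains exactly one perfect matching. -/

import Mathlib

/- Formalization framework for "The Matching Problem in General Graphs is in Quasi-NC"
(Svensson–Tarnawski).  The graph has vertex set `Fin n`; vectors indexed by edges are
modelled as functions `Sym2 (Fin n) → ℝ` (resp. `ℤ`) supported on the edge set. -/

open scoped BigOperators
open scoped Classical

noncomputable section

namespace PMQuasiNC

/-- The dot product `⟨w, x⟩` of two real vectors indexed by (potential) edges. -/
def dotR {n : ℕ} (w x : Sym2 (Fin n) → ℝ) : ℝ := ∑ e : Sym2 (Fin n), w e * x e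

/-- The dot product of two integer vectors indexed by (potential) edges. -/
def dotZ {n : ℕ} (y w : Sym2 (Fin n) → ℤ) : ℤ := ∑ e : Sym2 (Fin n), y e * w e

/-- The ℓ¹ norm `‖y‖₁` of an integer vector. -/
def l1norm {n : ℕ} (y : Sym2 (Fin n) → ℤ) : ℤ := ∑ e : Sym2 (Fin n), |y e|

/-- The support of an integer vector. -/
def suppZ {n : ℕ} (y : Sym2 (Fin n) → ℤ) : Set (Sym2 (Fin n)) := {e | y e ≠ 0}

/-- `δ(S)`: the set of edges of `G` with exactly one endpoint in `S`. -/
def cut {n : ℕ} (G : SimpleGraph (Fin n)) (S : Finset (Fin n)) : Set (Sym2 (Fin n)) :=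
  {e | e ∈ G.edgeSet ∧ ∃ u v, e = s(u, v) ∧ u ∈ S ∧ v ∉ S}

/-- `E(S)`: the set of edges of `G` with both endpoints in `S`. -/
def insideEdges {n : ℕ} (G : SimpleGraph (Fin n)) (S : Finset (Fin n)) :
    Set (Sym2 (Fin n)) :=
  {e | e ∈ G.edgeSet ∧ ∀ v ∈ e, v ∈ S}

/-- The indicator vector `1_{δ(S)}` of the cut `δ(S)`. -/
def cutInd {n : ℕ} (G : SimpleGraph (Fin n)) (S : Finset (Fin n)) : Sym2 (Fin n) → ℝ :=
  fun e => if e ∈ cut G S then 1 else 0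

/-- `⟨y, 1_{δ(S)}⟩ = Σ_{e ∈ δ(S)} y_e` for an integer vector `y`. -/
def cutSumZ {n : ℕ} (G : SimpleGraph (Fin n)) (S : Finset (Fin n))
    (y : Sym2 (Fin n) → ℤ) : ℤ :=
  ∑ e : Sym2 (Fin n), if e ∈ cut G S then y e else 0

/-- A perfect matching of `G`: a set of edges of `G` such that every vertex lies in
exactly one of them. -/
def IsPerfectMatching {n : ℕ} (G : SimpleGraph (Fin n)) (M : Set (Sym2 (Fin n))) : Prop :=
  M ⊆ G.edgeSet ∧ ∀ v : Fin n, ∃! e, e ∈ M ∧ v ∈ e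

/-- The indicator vector of a set of edges. -/
def indic {n : ℕ} (M : Set (Sym2 (Fin n))) : Sym2 (Fin n) → ℝ :=
  fun e => if e ∈ M then 1 else 0

/-- The perfect matching polytope: the convex hull of the indicator vectors of all
perfect matchings of `G`. -/
def PMpoly {n : ℕ} (G : SimpleGraph (Fin n)) : Set (Sym2 (Fin n) → ℝ) :=
  convexHull ℝ {x | ∃ M, IsPerfectMatching G M ∧ x = indic M}

/-- `F[w] = argmin {⟨w,x⟩ : x ∈ F}` for a real weight function `w`. -/
def faceMinR {n : ℕ} (F : Set (Sym2 (Fin n) → ℝ)) (w : Sym2 (Fin n) → ℝ) :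
    Set (Sym2 (Fin n) → ℝ) :=
  {x ∈ F | ∀ y ∈ F, dotR w x ≤ dotR w y}

/-- `F[w] = argmin {⟨w,x⟩ : x ∈ F}` for an integer weight function `w`. -/
def faceMin {n : ℕ} (F : Set (Sym2 (Fin n) → ℝ)) (w : Sym2 (Fin n) → ℤ) :
    Set (Sym2 (Fin n) → ℝ) :=
  faceMinR F (fun e => (w e : ℝ))

/-- A face of the perfect matching polytope: a nonempty subset of the form
`argmin {⟨w,x⟩ : x ∈ PM}` for some linear functional `w` (this includes `PM` itself,
via `w = 0`). -/
def IsFace {n : ℕ} (G : SimpleGraph (Fin n)) (F : Set (Sym2 (Fin n) → ℝ)) : Prop :=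
  F.Nonempty ∧ ∃ w : Sym2 (Fin n) → ℝ, F = faceMinR (PMpoly G) w

/-- `supp(F) = {e : ∃ x ∈ F, x_e > 0}`. -/
def faceSupp {n : ℕ} (F : Set (Sym2 (Fin n) → ℝ)) : Set (Sym2 (Fin n)) :=
  {e | ∃ x ∈ F, 0 < x e}

/-- `tight(F)`: the vertex sets `S` of odd cardinality with `x(δ(S)) = 1` for all
`x ∈ F`. -/
def tightSets {n : ℕ} (G : SimpleGraph (Fin n)) (F : Set (Sym2 (Fin n) → ℝ)) :
    Set (Finset (Fin n)) :=
  {S | Odd S.card ∧ ∀ x ∈ F, dotR (cutInd G S) x = 1}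

/-- An integer vector `y` respects a face `F` if `supp(y) ⊆ supp(F)` and
`⟨y, 1_{δ(S)}⟩ = 0` for every `S ∈ tight(F)`. -/
def RespectsFace {n : ℕ} (G : SimpleGraph (Fin n)) (y : Sym2 (Fin n) → ℤ)
    (F : Set (Sym2 (Fin n) → ℝ)) : Prop :=
  suppZ y ⊆ faceSupp F ∧ ∀ S ∈ tightSets G F, cutSumZ G S y = 0

/-- `S` is `F`-contractible: for every `e ∈ δ(S)` there are no two perfect matchings
in `F` that both contain `e` and differ on `E(S)`. -/
def Contractible {n : ℕ} (G : SimpleGraph (Fin n)) (F : Set (Sym2 (Fin n) → ℝ))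
    (S : Finset (Fin n)) : Prop :=
  ∀ e ∈ cut G S, ∀ M₁ M₂ : Set (Sym2 (Fin n)),
    IsPerfectMatching G M₁ → IsPerfectMatching G M₂ →
    indic M₁ ∈ F → indic M₂ ∈ F → e ∈ M₁ → e ∈ M₂ →
    M₁ ∩ insideEdges G S = M₂ ∩ insideEdges G S

/-- Two vertex sets cross if `S∩T`, `S\T`, `T\S` are all nonempty. -/
def Crossing {n : ℕ} (S T : Finset (Fin n)) : Prop :=
  (S ∩ T).Nonempty ∧ (S \ T).Nonempty ∧ (T \ S).Nonempty

/-- A family of vertex sets is laminar if no two of its members cross. -/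
def Laminar {n : ℕ} (L : Set (Finset (Fin n))) : Prop :=
  ∀ S ∈ L, ∀ T ∈ L, ¬ Crossing S T

/-- `L` is a maximal laminar subfamily of `S`: `L ⊆ S` is laminar and no set of
`S \ L` can be added to `L` while keeping it laminar. -/
def MaxLaminarIn {n : ℕ} (L S : Set (Finset (Fin n))) : Prop :=
  L ⊆ S ∧ Laminar L ∧ ∀ T ∈ S, T ∉ L → ¬ Laminar (insert T L)

/-- The vertices of the `(F, L, λ)`-contraction: the maximal sets of `L` of
cardinality at most `lam`. -/
def contrVerts {n : ℕ} (L : Set (Finset (Fin n))) (lam : ℕ) : Set (Finset (Fin n)) :=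
  {S | S ∈ L ∧ S.card ≤ lam ∧ ∀ T ∈ L, T.card ≤ lam → S ⊆ T → S = T}

/-- The edges of the `(F, L, λ)`-contraction of `G`, identified with their preimages
in `G`: edges of `supp(F)` that do not cross the boundary `δ(T)` of any `T ∈ L` with
`|T| > λ` and do not lie inside a contracted set. -/
def contrEdges {n : ℕ} (G : SimpleGraph (Fin n)) (F : Set (Sym2 (Fin n) → ℝ))
    (L : Set (Finset (Fin n))) (lam : ℕ) : Set (Sym2 (Fin n)) :=
  {e | e ∈ faceSupp F ∧ (∀ T ∈ L, lam < T.card → e ∉ cut G T) ∧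
       ∀ S ∈ contrVerts L lam, ¬ (∀ v ∈ e, v ∈ S)}

/-- Two vertices of `G` map to the same vertex of the `(F, L, λ)`-contraction. -/
def sameClass {n : ℕ} (L : Set (Finset (Fin n))) (lam : ℕ) (u v : Fin n) : Prop :=
  u = v ∨ ∃ S ∈ contrVerts L lam, u ∈ S ∧ v ∈ S

/-- The node-weight of (the contraction vertex of) a vertex `v`: the cardinality of the
contracted set containing `v` (and `1` if `v` is not contained in any contracted set). -/
def classWeight {n : ℕ} (L : Set (Finset (Fin n))) (lam : ℕ) (v : Fin n) : ℕ :=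
  max 1 (sSup {m : ℕ | ∃ S ∈ contrVerts L lam, v ∈ S ∧ S.card = m})

/-- The alternating indicator vector `χ̃_C = Σ_i (-1)^i 1_{e_i}` of a closed walk of
length `k` given by its oriented edges `C 0, …, C (k-1)` (edges of the contraction are
identified with their preimages in `G`). -/
def altInd {n : ℕ} (k : ℕ) (C : ℕ → Fin n × Fin n) : Sym2 (Fin n) → ℤ :=
  fun e => ∑ i ∈ Finset.range k, if s((C i).1, (C i).2) = e then (-1 : ℤ) ^ i else 0

/-- `C 0, …, C (k-1)` is an alternating circuit in the `(F, L, lam)`-contraction of `G`: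
a nonempty closed walk of even length whose alternating indicator vector is nonzero. -/
def IsAltCircuit {n : ℕ} (G : SimpleGraph (Fin n)) (F : Set (Sym2 (Fin n) → ℝ))
    (L : Set (Finset (Fin n))) (lam : ℕ) (k : ℕ) (C : ℕ → Fin n × Fin n) : Prop :=
  0 < k ∧ Even k ∧
  (∀ i < k, s((C i).1, (C i).2) ∈ contrEdges G F L lam) ∧
  (∀ i < k, sameClass L lam (C i).2 (C ((i + 1) % k)).1) ∧
  altInd k C ≠ 0

/-- The node-weight of a closed walk in the contraction: the sum of the node-weights of
the visited vertices, with multiplicity. -/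
def circuitWeight {n : ℕ} (L : Set (Finset (Fin n))) (lam : ℕ) (k : ℕ)
    (C : ℕ → Fin n × Fin n) : ℕ :=
  ∑ i ∈ Finset.range k, classWeight L lam (C i).1

/-- The `(F, L, lam)`-contraction of `G` has no alternating circuit of node-weight at
most `bound`. -/
def NoAltCircuit {n : ℕ} (G : SimpleGraph (Fin n)) (F : Set (Sym2 (Fin n) → ℝ))
    (L : Set (Finset (Fin n))) (lam bound : ℕ) : Prop :=
  ∀ k, ∀ C : ℕ → Fin n × Fin n,
    IsAltCircuit G F L lam k C → circuitWeight L lam k C ≤ bound → False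

/-- `S` is a union of vertex sets of the `(F, L, lam)`-contraction. -/
def IsUnionOfVerts {n : ℕ} (L : Set (Finset (Fin n))) (lam : ℕ)
    (S : Finset (Fin n)) : Prop :=
  ∃ A : Set (Finset (Fin n)), A ⊆ contrVerts L lam ∧
    (S : Set (Fin n)) = ⋃ T ∈ A, (T : Set (Fin n))

/-- A vector `z` on the edges of the `(F, L, lam)`-contraction `H` (identified with a
vector in `ℤ^E` via preimages) respects a subface `F'` if `supp(z) ⊆ supp(F')` and
`⟨z, 1_{δ(S)}⟩ = 0` for every `S ∈ tight(F')` that is a union of vertex sets of `H`. -/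
def RespectsContr {n : ℕ} (G : SimpleGraph (Fin n)) (L : Set (Finset (Fin n)))
    (lam : ℕ) (z : Sym2 (Fin n) → ℤ) (F' : Set (Sym2 (Fin n) → ℝ)) : Prop :=
  suppZ z ⊆ faceSupp F' ∧
  ∀ S ∈ tightSets G F', IsUnionOfVerts L lam S → cutSumZ G S z = 0

/-- The face-laminar pair `(F, L)` is `lam`-good: `L` is a maximal laminar subset of
`tight(F)`, every `S ∈ L` with `|S| ≤ lam` is `F`-contractible, and the
`(F, L, lam)`-contraction of `G` has no alternating circuit of node-weight at most
`lam`. -/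
def LambdaGood {n : ℕ} (G : SimpleGraph (Fin n)) (F : Set (Sym2 (Fin n) → ℝ))
    (L : Set (Finset (Fin n))) (lam : ℕ) : Prop :=
  MaxLaminarIn L (tightSets G F) ∧
  (∀ S ∈ L, S.card ≤ lam → Contractible G F S) ∧
  NoAltCircuit G F L lam lam

/-- The family of weight functions `W(t)`, relative to a fixed enumeration `idx` of the
edges: `w_k(e_j) = (4n²+1)^j mod k` for `k = 2, …, t`. -/
def Wfam (n : ℕ) (idx : Sym2 (Fin n) → ℕ) (t : ℕ) : Set (Sym2 (Fin n) → ℤ) :=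
  {w | ∃ k : ℕ, 2 ≤ k ∧ k ≤ t ∧ w = fun e => ((4 * (n : ℤ) ^ 2 + 1) ^ (idx e)) % (k : ℤ)}

/-- `W = W(n^20)`. -/
def Wbig (n : ℕ) (idx : Sym2 (Fin n) → ℕ) : Set (Sym2 (Fin n) → ℤ) :=
  Wfam n idx (n ^ 20)

/-- Concatenation of weight functions: `w ∘ w' = n²¹·w + w'`. -/
def concatW (n : ℕ) (w w' : Sym2 (Fin n) → ℤ) : Sym2 (Fin n) → ℤ :=
  fun e => (n : ℤ) ^ 21 * w e + w' e

/-- `W^k`: left-associated `k`-fold concatenations `w₁ ∘ ⋯ ∘ w_k` with each `wᵢ ∈ W`. -/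
def Wpow (n : ℕ) (idx : Sym2 (Fin n) → ℕ) : ℕ → Set (Sym2 (Fin n) → ℤ)
  | 0 => {fun _ => 0}
  | (k + 1) => {u | ∃ w ∈ Wpow n idx k, ∃ w' ∈ Wbig n idx, u = concatW n w w'}

/-- `idx` enumerates the edges of `G` as `e_1, …, e_{|E|}`. -/
def IsEnum {n : ℕ} (G : SimpleGraph (Fin n)) (idx : Sym2 (Fin n) → ℕ) : Prop :=
  Set.BijOn idx G.edgeSet (Set.Icc 1 G.edgeSet.ncard)


/-!
Suppose two perfect matchings `M₁ ≠ M₂` lie in `F`. Every vertex set of the contraction is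
tight, so each `Mᵢ` has exactly one edge leaving it; following these exits gives two
fixed-point-free involutions on the vertices of the contraction. Alternating between them traces
a closed walk whose vertices, before it closes, are distinct and hence disjoint vertex sets of
`G`, so its weight is at most `n ≤ λ`. If it starts at a vertex whose `M₁`-exit is not in `M₂`,
its first edge occurs only once and its alternating indicator is nonzero, contradicting
`λ`-goodness. Such a start exists by contractibility: if every `M₁`-exit were in `M₂`, the two
matchings would also agree inside every contracted set. So `F` contains a single matching, and
since `F` is an exposed face of a polytope, Krein–Milman makes it that single point.
-/

section AlternatingOrbit

variable {α : Type*} (f g : α → α)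

def altOrbit (a : α) : ℕ → α
  | 0 => a
  | t + 1 => if Even t then f (altOrbit a t) else g (altOrbit a t)

variable {f g}

theorem altOrbit_two_mul (a : α) (j : ℕ) : altOrbit f g a (2 * j) = (g ∘ f)^[j] a := by
  induction j with
  | zero => rfl
  | succ j ih =>
    rw [Function.iterate_succ_apply', ← ih, show 2 * (j + 1) = 2 * j + 1 + 1 by ring]
    simp [altOrbit]

theorem altOrbit_two_mul_add_one (a : α) (j : ℕ) :
    altOrbit f g a (2 * j + 1) = f ((g ∘ f)^[j] a) := by
  simp [altOrbit, altOrbit_two_mul]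

variable (hf : Function.Involutive f) (hg : Function.Involutive g)
  (hf₀ : ∀ x, f x ≠ x) (hg₀ : ∀ x, g x ≠ x)
include hf hg hf₀ hg₀

theorem iterate_comp_apply_ne (c : ℕ) : ∀ x, (g ∘ f)^[c] x ≠ f x := by
  induction c using Nat.twoStepInduction with
  | zero => exact fun x => (hf₀ x).symm
  | one => exact fun x => hg₀ (f x)
  | more c ih _ =>
    intro x h
    apply ih (g (f x))
    rw [Function.iterate_succ_apply', Function.iterate_succ_apply] at h
    simpa only [Function.comp_apply, hg (f _), hf _] using congrArg (fun z => f (g z)) h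

theorem iterate_comp_apply_ne_apply_iterate (a : α) (i j : ℕ) :
    (g ∘ f)^[i] a ≠ f ((g ∘ f)^[j] a) := by
  intro h
  rcases le_total j i with hji | hij
  · obtain ⟨d, rfl⟩ := exists_add_of_le hji
    apply iterate_comp_apply_ne hf hg hf₀ hg₀ d ((g ∘ f)^[j] a)
    rwa [← Function.iterate_add_apply, add_comm]
  · obtain ⟨d, rfl⟩ := exists_add_of_le hij
    apply iterate_comp_apply_ne hf hg hf₀ hg₀ d ((g ∘ f)^[i] a)
    rw [← Function.iterate_add_apply, add_comm, ← hf ((g ∘ f)^[i + d] a), ← h]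

theorem exists_altOrbit_cycle [Finite α] (a : α) :
    ∃ k, 0 < k ∧ Even k ∧ altOrbit f g a k = a ∧ Set.InjOn (altOrbit f g a) (Set.Iio k) := by
  set m := Function.minimalPeriod (g ∘ f) a
  have hm : 0 < m := Function.minimalPeriod_pos_of_mem_periodicPts
    ((hg.injective.comp hf.injective).mem_periodicPts a)
  have hinj := Function.iterate_injOn_Iio_minimalPeriod (f := g ∘ f) (x := a)
  refine ⟨2 * m, by omega, even_two_mul m, ?_, ?_⟩
  · rw [altOrbit_two_mul, Function.iterate_minimalPeriod]
  intro i hi j hj hij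
  simp only [Set.mem_Iio] at hi hj
  obtain ⟨i, rfl | rfl⟩ := Nat.even_or_odd' i <;> obtain ⟨j, rfl | rfl⟩ := Nat.even_or_odd' j <;>
    simp only [altOrbit_two_mul, altOrbit_two_mul_add_one] at hij
  · rw [hinj (by simp; omega) (by simp; omega) hij]
  · exact absurd hij (iterate_comp_apply_ne_apply_iterate hf hg hf₀ hg₀ a i j)
  · exact absurd hij.symm (iterate_comp_apply_ne_apply_iterate hf hg hf₀ hg₀ a j i)
  · rw [hinj (by simp; omega) (by simp; omega) (hf.injective hij)]

end AlternatingOrbit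

section Blocks

variable {n : ℕ} {L : Set (Finset (Fin n))} {lam : ℕ} {S T : Finset (Fin n)} {u v w : Fin n}

theorem eq_of_mem_contrVerts (hL : Laminar L) (hS : S ∈ contrVerts L lam)
    (hT : T ∈ contrVerts L lam) (hvS : v ∈ S) (hvT : v ∈ T) : S = T := by
  by_cases hST : S ⊆ T
  · exact hS.2.2 T hT.1 hT.2.1 hST
  by_cases hTS : T ⊆ S
  · exact (hT.2.2 S hS.1 hS.2.1 hTS).symm
  exact absurd ⟨⟨v, Finset.mem_inter.2 ⟨hvS, hvT⟩⟩, Finset.sdiff_nonempty.2 hST,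
    Finset.sdiff_nonempty.2 hTS⟩ (hL S hS.1 T hT.1)

/-- The vertex of the `(F, L, lam)`-contraction containing `v`, as a vertex set of `G`. -/
def block (L : Set (Finset (Fin n))) (lam : ℕ) (v : Fin n) : Finset (Fin n) :=
  if h : ∃ S ∈ contrVerts L lam, v ∈ S then h.choose else {v}

theorem block_eq_of_mem_contrVerts (hL : Laminar L) (hS : S ∈ contrVerts L lam) (hv : v ∈ S) :
    block L lam v = S := by
  have h : ∃ S ∈ contrVerts L lam, v ∈ S := ⟨S, hS, hv⟩
  rw [block, dif_pos h]
  exact eq_of_mem_contrVerts hL h.choose_spec.1 hS h.choose_spec.2 hv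

theorem block_of_forall_notMem (h : ∀ S ∈ contrVerts L lam, v ∉ S) : block L lam v = {v} := by
  rw [block, dif_neg (by simpa using h)]

theorem mem_block_self (v : Fin n) : v ∈ block L lam v := by
  unfold block
  split_ifs with h
  exacts [h.choose_spec.2, Finset.mem_singleton_self v]

theorem block_eq_of_mem (hL : Laminar L) (h : u ∈ block L lam v) :
    block L lam u = block L lam v := by
  by_cases hv : ∃ S ∈ contrVerts L lam, v ∈ S
  · obtain ⟨S, hS, hvS⟩ := hv
    rw [block_eq_of_mem_contrVerts hL hS hvS] at h ⊢
    exact block_eq_of_mem_contrVerts hL hS h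
  · push Not at hv
    rw [block_of_forall_notMem hv, Finset.mem_singleton] at h
    rw [h]

theorem disjoint_block (hL : Laminar L) (h : block L lam u ≠ block L lam v) :
    Disjoint (block L lam u) (block L lam v) :=
  Finset.disjoint_left.2 fun _ hu hv =>
    h ((block_eq_of_mem hL hu).symm.trans (block_eq_of_mem hL hv))

theorem sameClass_of_mem_block (hu : u ∈ block L lam v) (hw : w ∈ block L lam v) :
    sameClass L lam u w := by
  unfold block at hu hw
  split_ifs at hu hw with h
  · exact Or.inr ⟨h.choose, h.choose_spec.1, hu, hw⟩
  · rw [Finset.mem_singleton] at hu hw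
    exact Or.inl (hu.trans hw.symm)

theorem classWeight_eq_card_block (hL : Laminar L) (v : Fin n) :
    classWeight L lam v = (block L lam v).card := by
  by_cases hv : ∃ S ∈ contrVerts L lam, v ∈ S
  · obtain ⟨S, hS, hvS⟩ := hv
    have hcard : {m | ∃ T ∈ contrVerts L lam, v ∈ T ∧ T.card = m} = {S.card} := by
      ext m
      constructor
      · rintro ⟨T, hT, hvT, rfl⟩
        rw [eq_of_mem_contrVerts hL hT hS hvT hvS, Set.mem_singleton_iff]
      · rintro rfl
        exact ⟨S, hS, hvS, rfl⟩
    rw [classWeight, hcard, csSup_singleton, block_eq_of_mem_contrVerts hL hS hvS,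
      max_eq_right (Finset.card_pos.2 ⟨v, hvS⟩)]
  · push Not at hv
    have hcard : {m | ∃ T ∈ contrVerts L lam, v ∈ T ∧ T.card = m} = ∅ :=
      Set.eq_empty_of_forall_notMem fun _ ⟨T, hT, hvT, _⟩ => hv T hT hvT
    rw [classWeight, hcard, csSup_empty, block_of_forall_notMem hv, Finset.card_singleton]
    rfl

end Blocks

section Matchings

variable {n : ℕ} {G : SimpleGraph (Fin n)} {F : Set (Sym2 (Fin n) → ℝ)}
  {L : Set (Finset (Fin n))} {lam : ℕ} {M M₁ M₂ : Set (Sym2 (Fin n))} {S B : Finset (Fin n)}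

theorem IsPerfectMatching.eq_of_subset (h₁ : IsPerfectMatching G M₁)
    (h₂ : IsPerfectMatching G M₂) (h : M₁ ⊆ M₂) : M₁ = M₂ := by
  refine h.antisymm fun e he => ?_
  induction e using Sym2.ind with
  | h u w =>
    obtain ⟨f, ⟨hf, huf⟩, -⟩ := h₁.2 u
    obtain ⟨g, -, huniq⟩ := h₂.2 u
    rwa [huniq _ ⟨he, Sym2.mem_mk_left u w⟩, ← huniq f ⟨h hf, huf⟩]

theorem existsUnique_mem_cut_of_mem_tightSets (hS : S ∈ tightSets G F) (hMF : indic M ∈ F) :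
    ∃! e, e ∈ cut G S ∧ e ∈ M := by
  rw [Fintype.existsUnique_iff_card_one]
  have hcard : ((Finset.univ.filter fun e => e ∈ cut G S ∧ e ∈ M).card : ℝ) = 1 := by
    rw [← hS.2 (indic M) hMF, dotR, Finset.card_filter]
    push_cast
    refine Finset.sum_congr rfl fun e _ => ?_
    by_cases h1 : e ∈ cut G S <;> by_cases h2 : e ∈ M <;> simp [cutInd, indic, h1, h2]
  exact_mod_cast hcard

theorem existsUnique_mem_cut_singleton (hM : IsPerfectMatching G M) (v : Fin n) :
    ∃! e, e ∈ cut G {v} ∧ e ∈ M := by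
  refine (existsUnique_congr fun e => ?_).1 (hM.2 v)
  constructor
  · rintro ⟨he, hv⟩
    obtain ⟨w, rfl⟩ := Sym2.mem_iff_exists.1 hv
    have hvw : v ≠ w := G.ne_of_adj (hM.1 he)
    exact ⟨⟨hM.1 he, v, w, rfl, Finset.mem_singleton_self v, by simpa using hvw.symm⟩, he⟩
  · rintro ⟨⟨-, u, w, rfl, hu, -⟩, he⟩
    obtain rfl := Finset.mem_singleton.1 hu
    exact ⟨he, Sym2.mem_mk_left _ _⟩

theorem existsUnique_mem_cut_block (hLt : L ⊆ tightSets G F) (hL : Laminar L)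
    (hM : IsPerfectMatching G M) (hMF : indic M ∈ F) (v : Fin n) :
    ∃! e, e ∈ cut G (block L lam v) ∧ e ∈ M := by
  by_cases hv : ∃ S ∈ contrVerts L lam, v ∈ S
  · obtain ⟨S, hS, hvS⟩ := hv
    rw [block_eq_of_mem_contrVerts hL hS hvS]
    exact existsUnique_mem_cut_of_mem_tightSets (hLt hS.1) hMF
  · push Not at hv
    rw [block_of_forall_notMem hv]
    exact existsUnique_mem_cut_singleton hM v

def IsExit (M : Set (Sym2 (Fin n))) (B : Finset (Fin n)) (p : Fin n × Fin n) : Prop :=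
  s(p.1, p.2) ∈ M ∧ p.1 ∈ B ∧ p.2 ∉ B

theorem exists_isExit (hLt : L ⊆ tightSets G F) (hL : Laminar L)
    (hM : IsPerfectMatching G M) (hMF : indic M ∈ F) (hB : B ∈ Set.range (block L lam)) :
    ∃ p, IsExit M B p := by
  obtain ⟨v, rfl⟩ := hB
  obtain ⟨e, ⟨⟨-, u, w, rfl, hu, hw⟩, he⟩, -⟩ := existsUnique_mem_cut_block hLt hL hM hMF v
  exact ⟨(u, w), he, hu, hw⟩

theorem IsExit.eq (hLt : L ⊆ tightSets G F) (hL : Laminar L)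
    (hM : IsPerfectMatching G M) (hMF : indic M ∈ F) (hB : B ∈ Set.range (block L lam))
    {p q : Fin n × Fin n} (hp : IsExit M B p) (hq : IsExit M B q) : p = q := by
  obtain ⟨v, rfl⟩ := hB
  obtain ⟨e, -, huniq⟩ := existsUnique_mem_cut_block hLt hL hM hMF v
  have hedge : ∀ r, IsExit M (block L lam v) r → s(r.1, r.2) = e :=
    fun r hr => huniq _ ⟨⟨hM.1 hr.1, r.1, r.2, rfl, hr.2.1, hr.2.2⟩, hr.1⟩
  rcases Sym2.eq_iff.1 ((hedge p hp).trans (hedge q hq).symm) with ⟨h₁, h₂⟩ | ⟨h₁, -⟩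
  · exact Prod.ext h₁ h₂
  · exact absurd (h₁ ▸ hp.2.1) hq.2.2

theorem mem_contrEdges_of_isExit (hL : Laminar L) (hn : n ≤ lam) (hMF : indic M ∈ F)
    (hB : B ∈ Set.range (block L lam)) {p : Fin n × Fin n} (hp : IsExit M B p) :
    s(p.1, p.2) ∈ contrEdges G F L lam := by
  refine ⟨⟨indic M, hMF, by simp [indic, hp.1]⟩, fun T _ hT => ?_, fun S hS hin => ?_⟩
  · exact absurd hT (not_lt.2 ((T.card_le_univ.trans (by simp)).trans hn))
  · obtain ⟨v, rfl⟩ := hB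
    apply hp.2.2
    rw [← block_eq_of_mem hL hp.2.1,
      block_eq_of_mem_contrVerts hL hS (hin _ (Sym2.mem_mk_left _ _))]
    exact hin _ (Sym2.mem_mk_right _ _)

theorem subset_of_forall_exit_mem (hLt : L ⊆ tightSets G F) (hL : Laminar L)
    (hcontr : ∀ S ∈ L, S.card ≤ lam → Contractible G F S)
    (hM₁ : IsPerfectMatching G M₁) (hM₂ : IsPerfectMatching G M₂)
    (hM₁F : indic M₁ ∈ F) (hM₂F : indic M₂ ∈ F) {x : Set.range (block L lam) → Fin n × Fin n}
    (hx : ∀ B : Set.range (block L lam), IsExit M₁ B (x B))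
    (h : ∀ B, s((x B).1, (x B).2) ∈ M₂) : M₁ ⊆ M₂ := by
  intro e he
  induction e using Sym2.ind with
  | h u w =>
    let B : Set.range (block L lam) := ⟨block L lam u, u, rfl⟩
    by_cases hw : w ∈ block L lam u
    · obtain ⟨S, hS, huS⟩ : ∃ S ∈ contrVerts L lam, u ∈ S := by
        by_contra! hu
        rw [block_of_forall_notMem hu, Finset.mem_singleton] at hw
        exact G.ne_of_adj (hM₁.1 he) hw.symm
      have hBS : block L lam u = S := block_eq_of_mem_contrVerts hL hS huS
      rw [hBS] at hw
      have hxB : IsExit M₁ S (x B) := hBS ▸ hx B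
      have hagree := hcontr S hS.1 hS.2.1 _ ⟨hM₁.1 hxB.1, _, _, rfl, hxB.2.1, hxB.2.2⟩
        M₁ M₂ hM₁ hM₂ hM₁F hM₂F hxB.1 (h B)
      have hin : s(u, w) ∈ M₁ ∩ insideEdges G S := ⟨he, hM₁.1 he, by simp [huS, hw]⟩
      exact (hagree ▸ hin).1
    · have hexit : IsExit M₁ B (u, w) := ⟨he, mem_block_self u, hw⟩
      simpa [IsExit.eq hLt hL hM₁ hM₁F B.2 (hx B) hexit] using h B

end Matchings

section Circuit

variable {n : ℕ} {G : SimpleGraph (Fin n)} {F : Set (Sym2 (Fin n) → ℝ)}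
  {L : Set (Finset (Fin n))} {lam : ℕ} {M M₁ M₂ : Set (Sym2 (Fin n))}
  {x x₁ x₂ : Set.range (block L lam) → Fin n × Fin n} {a : Set.range (block L lam)} {k : ℕ}

def exitMap (x : Set.range (block L lam) → Fin n × Fin n) (B : Set.range (block L lam)) :
    Set.range (block L lam) :=
  ⟨block L lam (x B).2, Set.mem_range_self _⟩

theorem exitMap_ne (hx : ∀ B : Set.range (block L lam), IsExit M B (x B))
    (B : Set.range (block L lam)) : exitMap x B ≠ B := fun h =>
  (hx B).2.2 (congrArg Subtype.val h ▸ mem_block_self _)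

theorem exitMap_involutive (hLt : L ⊆ tightSets G F) (hL : Laminar L)
    (hM : IsPerfectMatching G M) (hMF : indic M ∈ F)
    (hx : ∀ B : Set.range (block L lam), IsExit M B (x B)) : Function.Involutive (exitMap x) := by
  intro B
  obtain ⟨v, hv⟩ := B.2
  have hp := hx B
  have hp₁ : block L lam (x B).1 = B := (block_eq_of_mem hL (hv ▸ hp.2.1)).trans hv
  have hswap : IsExit M (exitMap x B) ((x B).2, (x B).1) := by
    refine ⟨Sym2.eq_swap ▸ hp.1, mem_block_self _, fun h => hp.2.2 ?_⟩
    rw [← hp₁, block_eq_of_mem hL h]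
    exact mem_block_self _
  apply Subtype.ext
  change block L lam (x (exitMap x B)).2 = B
  rw [IsExit.eq hLt hL hM hMF (exitMap x B).2 (hx _) hswap]
  exact hp₁

def altCircuit (x₁ x₂ : Set.range (block L lam) → Fin n × Fin n) (a : Set.range (block L lam))
    (i : ℕ) : Fin n × Fin n :=
  if Even i then x₁ (altOrbit (exitMap x₁) (exitMap x₂) a i)
  else x₂ (altOrbit (exitMap x₁) (exitMap x₂) a i)

theorem isExit_altCircuit (hx₁ : ∀ B : Set.range (block L lam), IsExit M₁ B (x₁ B))
    (hx₂ : ∀ B : Set.range (block L lam), IsExit M₂ B (x₂ B)) (a : Set.range (block L lam))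
    (i : ℕ) : IsExit (if Even i then M₁ else M₂) (altOrbit (exitMap x₁) (exitMap x₂) a i).1
      (altCircuit x₁ x₂ a i) := by
  unfold altCircuit
  split_ifs
  exacts [hx₁ _, hx₂ _]

theorem block_altCircuit_fst (hL : Laminar L)
    (hx₁ : ∀ B : Set.range (block L lam), IsExit M₁ B (x₁ B))
    (hx₂ : ∀ B : Set.range (block L lam), IsExit M₂ B (x₂ B)) (a : Set.range (block L lam))
    (i : ℕ) : block L lam (altCircuit x₁ x₂ a i).1 = altOrbit (exitMap x₁) (exitMap x₂) a i := by
  obtain ⟨v, hv⟩ := (altOrbit (exitMap x₁) (exitMap x₂) a i).2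
  rw [← hv]
  exact block_eq_of_mem hL (hv ▸ (isExit_altCircuit hx₁ hx₂ a i).2.1)

theorem block_altCircuit_snd (a : Set.range (block L lam)) (i : ℕ) :
    block L lam (altCircuit x₁ x₂ a i).2 = altOrbit (exitMap x₁) (exitMap x₂) a (i + 1) := by
  unfold altCircuit
  rw [altOrbit]
  split_ifs <;> rfl

theorem altInd_altCircuit_ne_zero (hL : Laminar L)
    (hx₁ : ∀ B : Set.range (block L lam), IsExit M₁ B (x₁ B))
    (hx₂ : ∀ B : Set.range (block L lam), IsExit M₂ B (x₂ B))
    (ha : s((x₁ a).1, (x₁ a).2) ∉ M₂) (hk : 0 < k) (hkeven : Even k)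
    (hinj : Set.InjOn (altOrbit (exitMap x₁) (exitMap x₂) a) (Set.Iio k)) :
    altInd k (altCircuit x₁ x₂ a) ≠ 0 := by
  set C := altCircuit x₁ x₂ a
  set A := altOrbit (exitMap x₁) (exitMap x₂) a
  have hk1 : 1 < k := by obtain ⟨j, rfl⟩ := hkeven; omega
  intro h
  have h0 := congrFun h s((C 0).1, (C 0).2)
  rw [altInd, Finset.sum_eq_single_of_mem 0 (Finset.mem_range.2 hk)] at h0
  · simp at h0
  intro i hi hi0
  rw [if_neg]
  intro he
  have hCi := isExit_altCircuit hx₁ hx₂ a i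
  by_cases heven : Even i
  · have hmem : (C i).1 = (C 0).1 ∨ (C i).1 = (C 0).2 :=
      Sym2.mem_iff.1 (he ▸ Sym2.mem_mk_left _ _)
    have hblock : A i = A 0 ∨ A i = A 1 := by
      rcases hmem with h | h
      · left
        apply Subtype.ext
        rw [← block_altCircuit_fst hL hx₁ hx₂, ← block_altCircuit_fst hL hx₁ hx₂, h]
      · right
        apply Subtype.ext
        rw [← block_altCircuit_fst hL hx₁ hx₂, ← block_altCircuit_snd, h]
    have hi : i ∈ Set.Iio k := Finset.mem_range.1 hi
    rcases hblock with h | h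
    · exact hi0 (hinj hi hk h)
    · exact Nat.not_even_one (hinj hi hk1 h ▸ heven)
  · rw [if_neg heven] at hCi
    have hC0 : C 0 = x₁ a := by simp [C, altCircuit, altOrbit]
    exact ha (hC0 ▸ he ▸ hCi.1)

theorem isAltCircuit_altCircuit (hL : Laminar L) (hn : n ≤ lam)
    (hM₁F : indic M₁ ∈ F) (hM₂F : indic M₂ ∈ F)
    (hx₁ : ∀ B : Set.range (block L lam), IsExit M₁ B (x₁ B))
    (hx₂ : ∀ B : Set.range (block L lam), IsExit M₂ B (x₂ B))
    (ha : s((x₁ a).1, (x₁ a).2) ∉ M₂) (hk : 0 < k) (hkeven : Even k)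
    (hper : altOrbit (exitMap x₁) (exitMap x₂) a k = a)
    (hinj : Set.InjOn (altOrbit (exitMap x₁) (exitMap x₂) a) (Set.Iio k)) :
    IsAltCircuit G F L lam k (altCircuit x₁ x₂ a) := by
  refine ⟨hk, hkeven, fun i _ => ?_, fun i _ => ?_,
    altInd_altCircuit_ne_zero hL hx₁ hx₂ ha hk hkeven hinj⟩
  · have h := isExit_altCircuit hx₁ hx₂ a i
    split_ifs at h
    exacts [mem_contrEdges_of_isExit hL hn hM₁F (Subtype.mem _) h,
      mem_contrEdges_of_isExit hL hn hM₂F (Subtype.mem _) h]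
  · have hnext : altOrbit (exitMap x₁) (exitMap x₂) a ((i + 1) % k) =
        altOrbit (exitMap x₁) (exitMap x₂) a (i + 1) := by
      rcases Nat.lt_or_ge (i + 1) k with h | h
      · rw [Nat.mod_eq_of_lt h]
      · rw [show i + 1 = k by omega, Nat.mod_self, hper]
        rfl
    refine sameClass_of_mem_block (mem_block_self _) ?_
    rw [block_altCircuit_snd, ← hnext, ← block_altCircuit_fst hL hx₁ hx₂]
    exact mem_block_self _

theorem circuitWeight_altCircuit_le (hL : Laminar L)
    (hx₁ : ∀ B : Set.range (block L lam), IsExit M₁ B (x₁ B))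
    (hx₂ : ∀ B : Set.range (block L lam), IsExit M₂ B (x₂ B))
    (hinj : Set.InjOn (altOrbit (exitMap x₁) (exitMap x₂) a) (Set.Iio k)) :
    circuitWeight L lam k (altCircuit x₁ x₂ a) ≤ n := by
  unfold circuitWeight
  simp_rw [classWeight_eq_card_block hL, block_altCircuit_fst hL hx₁ hx₂]
  rw [← Finset.card_biUnion]
  · exact (Finset.card_le_univ _).trans (by simp)
  intro i hi j hj hij
  dsimp only [Function.onFun]
  obtain ⟨u, hu⟩ := (altOrbit (exitMap x₁) (exitMap x₂) a i).2
  obtain ⟨w, hw⟩ := (altOrbit (exitMap x₁) (exitMap x₂) a j).2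
  rw [← hu, ← hw]
  refine disjoint_block hL fun h => hij (hinj (Finset.mem_range.1 hi) (Finset.mem_range.1 hj) ?_)
  exact Subtype.ext (hu.symm.trans (h.trans hw))

end Circuit

section Face

variable {n : ℕ} {G : SimpleGraph (Fin n)} {F : Set (Sym2 (Fin n) → ℝ)}

theorem isExposed_faceMinR (A : Set (Sym2 (Fin n) → ℝ)) (w : Sym2 (Fin n) → ℝ) :
    IsExposed ℝ A (faceMinR A w) := fun _ =>
  ⟨-∑ e, w e • ContinuousLinearMap.proj (R := ℝ) (φ := fun _ => ℝ) e, by simp [faceMinR, dotR]⟩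

theorem isCompact_PMpoly : IsCompact (PMpoly G) := by
  have h : {x | ∃ M, IsPerfectMatching G M ∧ x = indic M} ⊆ Set.range indic := by
    rintro _ ⟨M, -, rfl⟩
    exact ⟨M, rfl⟩
  exact ((Set.finite_range indic).subset h).isCompact_convexHull ℝ

theorem IsFace.isExposed (hF : IsFace G F) : IsExposed ℝ (PMpoly G) F := by
  obtain ⟨-, w, rfl⟩ := hF
  exact isExposed_faceMinR _ w

theorem IsFace.extremePoints_subset (hF : IsFace G F) :
    F.extremePoints ℝ ⊆ {x | ∃ M, IsPerfectMatching G M ∧ x = indic M} :=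
  hF.isExposed.isExtreme.extremePoints_subset_extremePoints.trans extremePoints_convexHull_subset

end Face

theorem LambdaGood.eq_of_indic_mem {n : ℕ} {G : SimpleGraph (Fin n)} {F : Set (Sym2 (Fin n) → ℝ)}
    {L : Set (Finset (Fin n))} {lam : ℕ} {M₁ M₂ : Set (Sym2 (Fin n))}
    (hgood : LambdaGood G F L lam) (hn : n ≤ lam)
    (hM₁ : IsPerfectMatching G M₁) (hM₂ : IsPerfectMatching G M₂)
    (hM₁F : indic M₁ ∈ F) (hM₂F : indic M₂ ∈ F) : M₁ = M₂ := by
  obtain ⟨⟨hLt, hL, -⟩, hcontr, hno⟩ := hgood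
  choose x₁ hx₁ using fun B : Set.range (block L lam) => exists_isExit hLt hL hM₁ hM₁F B.2
  choose x₂ hx₂ using fun B : Set.range (block L lam) => exists_isExit hLt hL hM₂ hM₂F B.2
  by_contra hne
  obtain ⟨a, ha⟩ : ∃ a, s((x₁ a).1, (x₁ a).2) ∉ M₂ := by
    by_contra! h
    exact hne (hM₁.eq_of_subset hM₂
      (subset_of_forall_exit_mem hLt hL hcontr hM₁ hM₂ hM₁F hM₂F hx₁ h))
  obtain ⟨k, hk, hkeven, hper, hinj⟩ := exists_altOrbit_cycle
    (exitMap_involutive hLt hL hM₁ hM₁F hx₁) (exitMap_involutive hLt hL hM₂ hM₂F hx₂)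
    (exitMap_ne hx₁) (exitMap_ne hx₂) a
  exact hno k (altCircuit x₁ x₂ a)
    (isAltCircuit_altCircuit hL hn hM₁F hM₂F hx₁ hx₂ ha hk hkeven hper hinj)
    ((circuitWeight_altCircuit_le hL hx₁ hx₂ hinj).trans hn)

theorem lambda_good_final_general (n : ℕ) (G : SimpleGraph (Fin n))
    (F : Set (Sym2 (Fin n) → ℝ)) (L : Set (Finset (Fin n))) (lam : ℕ)
    (h1 : n ≤ lam) (hF : IsFace G F)
    (hgood : LambdaGood G F L lam) :
    ∃ M : Set (Sym2 (Fin n)), IsPerfectMatching G M ∧ F = {indic M} := by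
  have hcomp : IsCompact F := hF.isExposed.isCompact isCompact_PMpoly
  obtain ⟨_, hx₀⟩ := hcomp.extremePoints_nonempty hF.1
  obtain ⟨M₀, hM₀, rfl⟩ := hF.extremePoints_subset hx₀
  refine ⟨M₀, hM₀, Set.Subset.antisymm ?_ (Set.singleton_subset_iff.2 hx₀.1)⟩
  have hext : F.extremePoints ℝ ⊆ {indic M₀} := by
    intro x hx
    obtain ⟨M, hM, rfl⟩ := hF.extremePoints_subset hx
    rw [hgood.eq_of_indic_mem h1 hM hM₀ hx.1 hx₀.1]
    rfl
  calc F = closure (convexHull ℝ (F.extremePoints ℝ)) :=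
        (closure_convexHull_extremePoints hcomp
          (hF.isExposed.convex (convex_convexHull ℝ _))).symm
    _ ⊆ closure (convexHull ℝ {indic M₀}) := by gcongr
    _ = {indic M₀} := by simp

/-- **Lemma (finalization).**
If `(F, L)` is a `λ`-good face-laminar pair for some `λ` with `n ≤ λ ≤ 2n`, then the
face `F` consists of a single point: `F = {1_M}` for exactly one perfect matching `M`
(the indicator vector of which is the unique point of `F`). -/
theorem lambda_good_final (n : ℕ) (G : SimpleGraph (Fin n))
    (F : Set (Sym2 (Fin n) → ℝ)) (L : Set (Finset (Fin n))) (lam : ℕ)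
    (h1 : n ≤ lam) (h2 : lam ≤ 2 * n) (hF : IsFace G F)
    (hgood : LambdaGood G F L lam) :
    ∃ M : Set (Sym2 (Fin n)), IsPerfectMatching G M ∧ F = {indic M} :=
  lambda_good_final_general n G F L lam h1 hF hgood

end PMQuasiNC
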